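/- arXiv:1609.01699 — 5 statements merged into one kernel-verified Lean document; each statement's English description precedes it below -/
import Mathlib

section
/- If a graph H₀ is an induced subgraph of a realization of G(n,m,p), then H₀ is induced by exactly one proper clique cover 𝐂 ∈ 𝒞(H₀); i.e., the events {H₀ is induced by 𝐂}, for 𝐂 ranging over proper clique covers of H₀, are pairwise disjoint and their union is the event that H₀ is an induced subgraph. -/
/-- The realization of the random intersection graph on the vertex set `V(H₀)`
determined by a sample of choices `f`. -/
def interGraph {V W : Type*} (f : V → W → Bool) : SimpleGraph V :=
  SimpleGraph.fromRel (fun a b => ∃ w, f a w ∧ f b w)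

/-- `𝒞` is a clique cover of `G`. -/
def IsCliqueCover {V : Type*} (G : SimpleGraph V) (𝒞 : Set (Set V)) : Prop :=
  (∀ C ∈ 𝒞, C.Nonempty ∧ G.IsClique C) ∧
    ∀ v w, G.Adj v w → ∃ C ∈ 𝒞, v ∈ C ∧ w ∈ C

/-- A clique cover is proper if every part has at least 2 elements. -/
def IsProperCliqueCover {V : Type*} (G : SimpleGraph V) (𝒞 : Set (Set V)) : Prop :=
  IsCliqueCover G 𝒞 ∧ ∀ C ∈ 𝒞, 2 ≤ C.ncard

/-- `H₀` (on vertex set `V`) is induced by the clique cover `𝒞` in the realization `f`: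
there are disjoint nonempty sets of objects `Wf C`, `C ∈ 𝒞`, each of whose objects is chosen
by exactly the vertices of `C`, and every object outside their union is chosen by at most
one vertex of `V(H₀)`. -/
def InducedByCover {V W : Type*} (f : V → W → Bool) (𝒞 : Set (Set V)) : Prop :=
  ∃ Wf : Set V → Set W,
    (∀ C ∈ 𝒞, (Wf C).Nonempty) ∧
      (∀ C ∈ 𝒞, ∀ D ∈ 𝒞, C ≠ D → Disjoint (Wf C) (Wf D)) ∧
      (∀ C ∈ 𝒞, ∀ w ∈ Wf C, ∀ v : V, f v w = true ↔ v ∈ C) ∧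
      (∀ w : W, w ∉ ⋃ C ∈ 𝒞, Wf C → {v : V | f v w = true}.Subsingleton)

/-- If `H₀` is an induced subgraph of the realization of `G(n,m,p)`, then `H₀` is induced
by exactly one proper clique cover. -/
theorem induced_by_unique_proper_clique_cover {V W : Type*} [Finite V] [Finite W]
    (H₀ : SimpleGraph V) (f : V → W → Bool)
    (hind : H₀ = interGraph f) :
    ∃! 𝒞 : Set (Set V), IsProperCliqueCover H₀ 𝒞 ∧ InducedByCover f 𝒞 := by
  subst hind
  set 𝒞 : Set (Set V) := {C | (∃ w : W, C = {v | f v w = true}) ∧ 2 ≤ C.ncard} with h𝒞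
  refine ⟨𝒞, ⟨⟨⟨?_, ?_⟩, ?_⟩, ?_⟩, ?_⟩
  · -- nonempty cliques
    rintro C ⟨⟨w, rfl⟩, hcard⟩
    constructor
    · exact Set.nonempty_of_ncard_ne_zero (by omega)
    · intro a ha b hb hab
      exact ⟨hab, Or.inl ⟨w, ha, hb⟩⟩
  · -- cover
    intro v u hadj
    obtain ⟨hne, h⟩ := hadj
    have : ∃ w, f v w ∧ f u w := by
      rcases h with ⟨w, h1, h2⟩ | ⟨w, h1, h2⟩
      exacts [⟨w, h1, h2⟩, ⟨w, h2, h1⟩]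
    obtain ⟨w, h1, h2⟩ := this
    refine ⟨{x | f x w = true}, ⟨⟨w, rfl⟩, ?_⟩, h1, h2⟩
    rw [show (2 : ℕ) = 1 + 1 by rfl, Nat.add_one_le_iff]
    exact (Set.one_lt_ncard (Set.toFinite _)).2 ⟨v, h1, u, h2, hne⟩
  · -- proper
    rintro C ⟨_, hcard⟩; exact hcard
  · -- induced by cover
    refine ⟨fun C => {w | {v | f v w = true} = C}, ?_, ?_, ?_, ?_⟩
    · rintro C ⟨⟨w, rfl⟩, _⟩; exact ⟨w, rfl⟩
    · intro C hC D hD hne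
      rw [Set.disjoint_left]
      rintro w (rfl : _ = C) (h2 : _ = D)
      exact hne h2
    · rintro C hC w (rfl : _ = C) v; rfl
    · intro w hw v hv u hu
      by_contra hne
      refine hw ?_
      refine Set.mem_biUnion (x := {v | f v w = true}) ⟨⟨w, rfl⟩, ?_⟩ rfl
      rw [show (2 : ℕ) = 1 + 1 by rfl, Nat.add_one_le_iff]
      exact (Set.one_lt_ncard (Set.toFinite _)).2 ⟨v, hv, u, hu, hne⟩
  · -- uniqueness
    rintro 𝒟 ⟨⟨⟨hcl, _⟩, hproper⟩, Wf, hne, hdisj, hexact, hout⟩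
    ext C
    constructor
    · rintro hC
      obtain ⟨w, hw⟩ := hne C hC
      have hCw : C = {v | f v w = true} := by
        ext v; exact (hexact C hC w hw v).symm
      exact ⟨⟨w, hCw⟩, hproper C hC⟩
    · rintro ⟨⟨w, rfl⟩, hcard⟩
      by_cases hmem : w ∈ ⋃ D ∈ 𝒟, Wf D
      · obtain ⟨D, hD, hwD⟩ := Set.mem_iUnion₂.1 hmem
        have : {v | f v w = true} = D := by
          ext v; exact hexact D hD w hwD v
        rwa [this]
      · exfalso
        have hsub := hout w hmem
        have := (Set.one_lt_ncard (Set.toFinite _)).1 (by omega : 1 < Set.ncard {v | f v w = true})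
        obtain ⟨a, ha, b, hb, hab⟩ := this
        exact hab (hsub ha hb)
end

section
/- For any two positive reals λ and μ, the total variation distance between the Poisson distributions Po(λ) and Po(μ) satisfies d_TV(Po(λ), Po(μ)) ≤ |λ − μ|. -/
lemma tsum_pow_div_factorial_eq (x : ℝ) : ∑' n : ℕ, x ^ n / n.factorial = Real.exp x := by
  rw [Real.exp_eq_exp_ℝ, NormedSpace.exp_eq_tsum_div]

lemma poisson_tv_aux (l m : ℝ) (hl : 0 < l) (hlm : l ≤ m) :
    ∑' k : ℕ,
        |Real.exp (-l) * l ^ k / (Nat.factorial k) -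
          Real.exp (-m) * m ^ k / (Nat.factorial k)| ≤ 2 * (m - l) := by
  have hsum1 : Summable (fun k : ℕ => l ^ k / k.factorial) := Real.summable_pow_div_factorial l
  have hsum2 : Summable (fun k : ℕ => m ^ k / k.factorial) := Real.summable_pow_div_factorial m
  set c : ℕ → ℝ := fun k => (Real.exp (-l) - Real.exp (-m)) * (l ^ k / k.factorial) with hc
  set d : ℕ → ℝ := fun k => Real.exp (-m) * (m ^ k / k.factorial - l ^ k / k.factorial) with hd
  have hsc : Summable c := hsum1.mul_left _
  have hsd : Summable d := (hsum2.sub hsum1).mul_left _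
  have hexp : Real.exp (-m) ≤ Real.exp (-l) := Real.exp_le_exp.mpr (by linarith)
  have habs : ∀ k : ℕ, |Real.exp (-l) * l ^ k / (Nat.factorial k) -
      Real.exp (-m) * m ^ k / (Nat.factorial k)| ≤ c k + d k := by
    intro k
    have hpow : l ^ k ≤ m ^ k := pow_le_pow_left₀ hl.le hlm k
    have hfac : (0:ℝ) < k.factorial := by positivity
    have hc0 : 0 ≤ c k := by
      apply mul_nonneg (by linarith) (by positivity)
    have hd0 : 0 ≤ d k := by
      apply mul_nonneg (Real.exp_pos _).le
      have : l ^ k / (k.factorial:ℝ) ≤ m ^ k / k.factorial := by gcongr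
      linarith
    have h1 : Real.exp (-l) * l ^ k / (Nat.factorial k) -
        Real.exp (-m) * m ^ k / (Nat.factorial k) = c k - d k := by
      simp only [hc, hd]; ring
    calc |Real.exp (-l) * l ^ k / (Nat.factorial k) -
        Real.exp (-m) * m ^ k / (Nat.factorial k)| = |c k - d k| := by rw [h1]
      _ ≤ |c k| + |d k| := abs_sub _ _
      _ = c k + d k := by rw [abs_of_nonneg hc0, abs_of_nonneg hd0]
  have hsumabs : Summable (fun k : ℕ => |Real.exp (-l) * l ^ k / (Nat.factorial k) -
      Real.exp (-m) * m ^ k / (Nat.factorial k)|) := by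
    apply Summable.of_nonneg_of_le (fun k => abs_nonneg _) habs (hsc.add hsd)
  have htc : ∑' k, c k = 1 - Real.exp (l - m) := by
    rw [tsum_mul_left, tsum_pow_div_factorial_eq, sub_mul, ← Real.exp_add, ← Real.exp_add]
    norm_num
    ring_nf
  have htd : ∑' k, d k = 1 - Real.exp (l - m) := by
    rw [tsum_mul_left, Summable.tsum_sub hsum2 hsum1, tsum_pow_div_factorial_eq,
      tsum_pow_div_factorial_eq, mul_sub, ← Real.exp_add, ← Real.exp_add]
    norm_num
    ring_nf
  have hle : 1 - Real.exp (l - m) ≤ m - l := by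
    have := Real.add_one_le_exp (l - m)
    linarith
  calc ∑' k : ℕ, |Real.exp (-l) * l ^ k / (Nat.factorial k) -
        Real.exp (-m) * m ^ k / (Nat.factorial k)|
      ≤ ∑' k, (c k + d k) := Summable.tsum_le_tsum habs hsumabs (hsc.add hsd)
    _ = (∑' k, c k) + ∑' k, d k := Summable.tsum_add hsc hsd
    _ ≤ 2 * (m - l) := by rw [htc, htd]; linarith

/-- For positive reals `λ, μ`, the total variation distance between the Poisson
distributions `Po(λ)` and `Po(μ)` is at most `|λ − μ|`. -/
theorem poisson_tv_distance_le (l m : ℝ) (hl : 0 < l) (hm : 0 < m) :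
    (1 / 2) * ∑' k : ℕ,
        |Real.exp (-l) * l ^ k / (Nat.factorial k) -
          Real.exp (-m) * m ^ k / (Nat.factorial k)| ≤ |l - m| := by
  rcases le_total l m with h | h
  · have := poisson_tv_aux l m hl h
    rw [abs_of_nonpos (by linarith)]
    linarith
  · have := poisson_tv_aux m l hm h
    have heq : ∀ k : ℕ, |Real.exp (-l) * l ^ k / (Nat.factorial k) -
          Real.exp (-m) * m ^ k / (Nat.factorial k)| =
        |Real.exp (-m) * m ^ k / (Nat.factorial k) -
          Real.exp (-l) * l ^ k / (Nat.factorial k)| := fun k => abs_sub_comm _ _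
    rw [tsum_congr heq, abs_of_nonneg (by linarith)]
    linarith
end

section
/- Let 𝐂₁ = {C_{1,1},…,C_{1,r}} and 𝐂₂ = {C_{2,1},…,C_{2,s}} be clique covers of graphs G₁ and G₂ respectively, where G₁ ∩ G₂ is an induced subgraph of both. If 𝐂 is a clique cover of G₁ ∪ G₂ with 𝐂[V(G₁)] = 𝐂₁ and 𝐂[V(G₂)] = 𝐂₂, then every C ∈ 𝐂 is of one of the three forms: (i) C = C_{1,i} for some i and C ≠ C_{2,j} for all j; (ii) C = C_{2,j} for some j and C ≠ C_{1,i} for all i; (iii) C = C_{1,i} ∪ C_{2,j} for some i, j (including C_{1,i} = C_{2,j}). -/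
/-- `𝒞` is a clique cover of the part of `G` on the vertex set `U`. -/
def IsCliqueCoverOn {V : Type*} (G : SimpleGraph V) (U : Set V) (𝒞 : Set (Set V)) : Prop :=
  (∀ C ∈ 𝒞, C.Nonempty ∧ C ⊆ U ∧ G.IsClique C) ∧
    ∀ v w, v ∈ U → w ∈ U → G.Adj v w → ∃ C ∈ 𝒞, v ∈ C ∧ w ∈ C

/-- If `𝐂` is a clique cover of `G₁ ∪ G₂` whose restrictions to `V(G₁)` and `V(G₂)` are
`𝐂₁` and `𝐂₂`, then each `C ∈ 𝐂` is (i) some `C₁ᵢ` and no `C₂ⱼ`, (ii) some `C₂ⱼ` and no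
`C₁ᵢ`, or (iii) a union `C₁ᵢ ∪ C₂ⱼ`. -/
theorem clique_cover_of_union_forms {V : Type*}
    (G₁ G₂ : SimpleGraph V) (V₁ V₂ : Set V)
    (𝒞₁ 𝒞₂ 𝒞 : Set (Set V))
    (h₁ : IsCliqueCoverOn G₁ V₁ 𝒞₁) (h₂ : IsCliqueCoverOn G₂ V₂ 𝒞₂)
    (h : IsCliqueCoverOn (G₁ ⊔ G₂) (V₁ ∪ V₂) 𝒞)
    (hres₁ : {S : Set V | ∃ C ∈ 𝒞, (C ∩ V₁).Nonempty ∧ S = C ∩ V₁} = 𝒞₁)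
    (hres₂ : {S : Set V | ∃ C ∈ 𝒞, (C ∩ V₂).Nonempty ∧ S = C ∩ V₂} = 𝒞₂) :
    ∀ C ∈ 𝒞,
      (C ∈ 𝒞₁ ∧ C ∉ 𝒞₂) ∨ (C ∈ 𝒞₂ ∧ C ∉ 𝒞₁) ∨
        (∃ C₁ ∈ 𝒞₁, ∃ C₂ ∈ 𝒞₂, C = C₁ ∪ C₂) := by
  intro C hC
  obtain ⟨hne, hsub, -⟩ := h.1 C hC
  by_cases hc1 : (C ∩ V₁).Nonempty
  · by_cases hc2 : (C ∩ V₂).Nonempty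
    · refine Or.inr (Or.inr ⟨C ∩ V₁, ?_, C ∩ V₂, ?_, ?_⟩)
      · rw [← hres₁]; exact ⟨C, hC, hc1, rfl⟩
      · rw [← hres₂]; exact ⟨C, hC, hc2, rfl⟩
      · ext x; constructor
        · intro hx
          rcases hsub hx with h | h
          · exact Or.inl ⟨hx, h⟩
          · exact Or.inr ⟨hx, h⟩
        · rintro (⟨hx, -⟩ | ⟨hx, -⟩) <;> exact hx
    · have hCV1 : C ⊆ V₁ := fun x hx => by
        rcases hsub hx with h | h
        · exact h
        · exact absurd ⟨x, hx, h⟩ hc2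
      refine Or.inl ⟨?_, ?_⟩
      · rw [← hres₁]
        exact ⟨C, hC, by rwa [Set.inter_eq_left.mpr hCV1],
          (Set.inter_eq_left.mpr hCV1).symm⟩
      · intro hmem
        obtain ⟨hne', hsub', -⟩ := h₂.1 C hmem
        obtain ⟨x, hx⟩ := hne'
        exact hc2 ⟨x, hx, hsub' hx⟩
  · have hCV2 : C ⊆ V₂ := fun x hx => by
      rcases hsub hx with h | h
      · exact absurd ⟨x, hx, h⟩ hc1
      · exact h
    refine Or.inr (Or.inl ⟨?_, ?_⟩)
    · rw [← hres₂]
      exact ⟨C, hC, by rwa [Set.inter_eq_left.mpr hCV2],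
        (Set.inter_eq_left.mpr hCV2).symm⟩
    · intro hmem
      obtain ⟨hne', hsub', -⟩ := h₁.1 C hmem
      obtain ⟨x, hx⟩ := hne'
      exact hc1 ⟨x, hx, hsub' hx⟩
end

section
/- Every strictly balanced triangle-free graph H₀ on h vertices with e edges is strictly α-balanced for every α > h/e; i.e., its unique proper clique cover 𝐂 (the edges) satisfies η₂(H₀,𝐂,S) > η₂(H₀,𝐂,V(H₀)) = h/(2e) + α/2 for all nonempty proper S ⊊ V(H₀). -/
open Finset
open scoped Classical

/-!
Write `s = |S|`, `a` for the number of edges inside `S` and `b` for the number of edges meeting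
`S`. An edge meeting `S` meets it in one or two vertices, so `Σ𝐂[S] = a + b` and `Σ𝐂'[S] = 2a`:
`η₂(S)` is `(s + αb)/(a + b)` or `s/(2a) + α/2`, and for `S = V(H₀)` both equal
`h/(2e) + α/2`. The second value beats this by strict balance `a/s < e/h`. For the first,
`2e(s + αb) - (a + b)(h + αe) = 2(es - ah) + (αe - h)(b - a) > 0`, since `α > h/e` and `a ≤ b`;
here `b > 0`, as otherwise every edge lies in the complement of `S`, against balance there.
-/

/-- The exponent `η₂(H₀,𝐂,S)` for the edge clique cover `𝐂` of a graph `G`: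
`(|S| + α|𝐂[S]|)/Σ𝐂[S]` if `α < |S|/(Σ𝐂[S] − |𝐂[S]|)` or `Σ𝐂[S] = |𝐂[S]|`, and
`(|S| + α|𝐂'[S]|)/Σ𝐂'[S]` otherwise. -/
noncomputable def eta2 {V : Type*} [Fintype V] [DecidableEq V]
    (G : SimpleGraph V) [DecidableRel G.Adj] (α : ℝ) (S : Finset V) : ℝ :=
  let CS := G.edgeFinset.filter fun ed => ∃ v ∈ ed, v ∈ S
  let sCS : ℕ := ∑ ed ∈ CS, (S.filter fun v => v ∈ ed).card
  let C'S := G.edgeFinset.filter fun ed => ∀ v ∈ ed, v ∈ S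
  if α < (S.card : ℝ) / ((sCS - CS.card : ℕ) : ℝ) ∨ sCS = CS.card then
    ((S.card : ℝ) + α * CS.card) / sCS
  else
    ((S.card : ℝ) + α * C'S.card) / (2 * C'S.card)

lemma add_mul_div_two_mul_lt_add_mul_div_two_mul {h e s a α : ℝ} (he : 0 < e) (ha : 0 < a)
    (hbal : a * h < e * s) : (h + α * e) / (2 * e) < (s + α * a) / (2 * a) := by
  rw [div_lt_div_iff₀ (by positivity) (by positivity)]
  linarith

lemma add_mul_div_two_mul_lt_add_mul_div_add {h e s a b α : ℝ} (he : 0 < e) (ha : 0 ≤ a)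
    (hb : 0 < b) (hab : a ≤ b) (hα : h ≤ α * e) (hbal : a * h < e * s) :
    (h + α * e) / (2 * e) < (s + α * b) / (b + a) := by
  rw [div_lt_div_iff₀ (by positivity) (by positivity)]
  nlinarith [mul_nonneg (sub_nonneg.2 hα) (sub_nonneg.2 hab)]

namespace SimpleGraph

variable {V : Type*} [Fintype V] [DecidableEq V] (G : SimpleGraph V) [DecidableRel G.Adj]

def edgesMeeting (S : Finset V) : Finset (Sym2 V) :=
  G.edgeFinset.filter fun ed => ∃ v ∈ ed, v ∈ S

def edgesInside (S : Finset V) : Finset (Sym2 V) :=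
  G.edgeFinset.filter fun ed => ∀ v ∈ ed, v ∈ S

def StrictlyBalanced : Prop :=
  ∀ S : Finset V, S.Nonempty → S ≠ univ →
    (#(G.edgesInside S) : ℝ) / #S < #G.edgeFinset / Fintype.card V

lemma edgesInside_subset_edgesMeeting (S : Finset V) : G.edgesInside S ⊆ G.edgesMeeting S :=
  fun ed hed =>
    mem_filter.2 ⟨(mem_filter.1 hed).1, _, ed.out_fst_mem, (mem_filter.1 hed).2 _ ed.out_fst_mem⟩

variable {G}

lemma card_filter_mem_of_mem_edgeFinset (S : Finset V) {ed : Sym2 V}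
    (hed : ed ∈ G.edgeFinset) :
    #(S.filter fun v => v ∈ ed) =
      (if ∃ v ∈ ed, v ∈ S then 1 else 0) + (if ∀ v ∈ ed, v ∈ S then 1 else 0) := by
  induction ed using Sym2.ind with
  | _ x y =>
    have hxy : x ≠ y := (mem_edgeSet G).1 (mem_edgeFinset.1 hed) |>.ne
    have hfilter : (S.filter fun v => v ∈ s(x, y)) = ({x, y} : Finset V).filter (· ∈ S) := by
      ext v; simp [Sym2.mem_iff, and_comm]
    rw [hfilter, card_filter, sum_pair hxy]
    by_cases hx : x ∈ S <;> by_cases hy : y ∈ S <;> simp [hx, hy]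

variable (G)

lemma sum_card_filter_mem_edgesMeeting (S : Finset V) :
    ∑ ed ∈ G.edgesMeeting S, #(S.filter fun v => v ∈ ed) =
      #(G.edgesMeeting S) + #(G.edgesInside S) := by
  have hinside : (G.edgesMeeting S).filter (fun ed => ∀ v ∈ ed, v ∈ S) = G.edgesInside S := by
    ext ed
    exact ⟨fun h => mem_filter.2 ⟨(mem_filter.1 (mem_filter.1 h).1).1, (mem_filter.1 h).2⟩,
      fun h => mem_filter.2 ⟨G.edgesInside_subset_edgesMeeting S h, (mem_filter.1 h).2⟩⟩
  have hcard (ed) (hed : ed ∈ G.edgesMeeting S) :=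
    card_filter_mem_of_mem_edgeFinset S (mem_filter.1 hed).1
  rw [sum_congr rfl hcard, sum_add_distrib, sum_boole, sum_boole, hinside,
    filter_true_of_mem (s := G.edgesMeeting S) fun ed hed => (mem_filter.1 hed).2,
    Nat.cast_id, Nat.cast_id]

lemma card_edgesInside_compl_add_card_edgesMeeting (S : Finset V) :
    #(G.edgesInside Sᶜ) + #(G.edgesMeeting S) = #G.edgeFinset := by
  rw [add_comm, edgesMeeting, edgesInside, ← card_filter_add_card_filter_not
    (s := G.edgeFinset) (fun ed => ∃ v ∈ ed, v ∈ S)]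
  congr 2
  ext ed
  simp

lemma eta2_eq (α : ℝ) (S : Finset V) :
    eta2 G α S =
      if α < #S / (#(G.edgesInside S) : ℝ) ∨ #(G.edgesInside S) = 0 then
        (#S + α * #(G.edgesMeeting S)) / (#(G.edgesMeeting S) + #(G.edgesInside S))
      else (#S + α * #(G.edgesInside S)) / (2 * #(G.edgesInside S)) := by
  have hsum := G.sum_card_filter_mem_edgesMeeting S
  unfold edgesMeeting edgesInside at hsum ⊢
  simp only [eta2, hsum, Nat.add_sub_cancel_left, Nat.add_eq_left, Nat.cast_add]

lemma edgesInside_univ : G.edgesInside univ = G.edgeFinset :=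
  filter_true_of_mem fun _ _ v _ => mem_univ v

lemma edgesMeeting_univ : G.edgesMeeting univ = G.edgeFinset :=
  filter_true_of_mem fun ed _ => ⟨_, ed.out_fst_mem, mem_univ _⟩

lemma eta2_univ (α : ℝ) :
    eta2 G α univ = (Fintype.card V + α * #G.edgeFinset) / (2 * #G.edgeFinset) := by
  rw [eta2_eq, edgesInside_univ, edgesMeeting_univ, card_univ]
  split_ifs <;> ring

variable {G}

lemma StrictlyBalanced.card_edgesInside_mul_lt (hG : G.StrictlyBalanced) {S : Finset V}
    (hS : S.Nonempty) (hSu : S ≠ univ) :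
    (#(G.edgesInside S) : ℝ) * Fintype.card V < #G.edgeFinset * #S := by
  have hV : (0 : ℝ) < Fintype.card V := by
    have := hS.to_type
    exact_mod_cast Fintype.card_pos
  exact (div_lt_div_iff₀ (by exact_mod_cast hS.card_pos) hV).1 (hG S hS hSu)

lemma StrictlyBalanced.edgesMeeting_nonempty (hG : G.StrictlyBalanced) {S : Finset V}
    (hS : S.Nonempty) (hSu : S ≠ univ) : (G.edgesMeeting S).Nonempty := by
  rw [nonempty_iff_ne_empty]
  intro hempty
  have hSc : Sᶜ.Nonempty := nonempty_iff_ne_empty.2 (by simpa using hSu)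
  have hScu : Sᶜ ≠ univ := by simpa using hS.ne_empty
  have hinside : #(G.edgesInside Sᶜ) = #G.edgeFinset := by
    simpa [hempty] using G.card_edgesInside_compl_add_card_edgesMeeting S
  have hlt := hG.card_edgesInside_mul_lt hSc hScu
  rw [hinside] at hlt
  have hcard : (#Sᶜ : ℝ) ≤ Fintype.card V := by exact_mod_cast card_le_univ Sᶜ
  nlinarith [(#G.edgeFinset).cast_nonneg (α := ℝ)]

end SimpleGraph

open SimpleGraph in
theorem strictly_balanced_trianglefree_strictly_alpha_balanced_general
    {V : Type*} [Fintype V] [DecidableEq V]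
    (H₀ : SimpleGraph V) [DecidableRel H₀.Adj]
    (h e : ℕ) (hh : Fintype.card V = h) (he : H₀.edgeFinset.card = e) (he1 : 1 ≤ e)
    (hbal : ∀ S : Finset V, S.Nonempty → S ≠ Finset.univ →
      ((H₀.edgeFinset.filter fun ed => ∀ v ∈ ed, v ∈ S).card : ℝ) / S.card <
        (e : ℝ) / h)
    (α : ℝ) (hα : (h : ℝ) / e < α) :
    eta2 H₀ α Finset.univ = (h : ℝ) / (2 * e) + α / 2 ∧
      ∀ S : Finset V, S.Nonempty → S ≠ Finset.univ →
        eta2 H₀ α S > eta2 H₀ α Finset.univ := by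
  subst hh he
  have hG : H₀.StrictlyBalanced := hbal
  have he0 : (0 : ℝ) < #H₀.edgeFinset := by exact_mod_cast he1
  have hαe : (Fintype.card V : ℝ) < α * #H₀.edgeFinset := (div_lt_iff₀ he0).1 hα
  refine ⟨by rw [eta2_univ]; field_simp, fun S hS hSu => ?_⟩
  have hbalS := hG.card_edgesInside_mul_lt hS hSu
  rw [gt_iff_lt, eta2_univ, eta2_eq]
  split_ifs with hbranch
  · exact add_mul_div_two_mul_lt_add_mul_div_add he0 (Nat.cast_nonneg _)
      (by exact_mod_cast (hG.edgesMeeting_nonempty hS hSu).card_pos)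
      (by exact_mod_cast card_le_card (edgesInside_subset_edgesMeeting H₀ S)) hαe.le hbalS
  · have hinside : 0 < #(H₀.edgesInside S) := Nat.pos_of_ne_zero (not_or.1 hbranch).2
    exact add_mul_div_two_mul_lt_add_mul_div_two_mul he0 (by exact_mod_cast hinside) hbalS

/-- Every strictly balanced triangle-free graph `H₀` on `h` vertices with `e` edges is
strictly `α`-balanced for every `α > h/e`: its (unique proper) edge clique cover satisfies
`η₂(H₀,𝐂,S) > η₂(H₀,𝐂,V(H₀)) = h/(2e) + α/2` for all nonempty proper `S`. -/
theorem strictly_balanced_trianglefree_strictly_alpha_balanced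
    {V : Type*} [Fintype V] [DecidableEq V]
    (H₀ : SimpleGraph V) [DecidableRel H₀.Adj]
    (h e : ℕ) (hh : Fintype.card V = h) (he : H₀.edgeFinset.card = e) (he1 : 1 ≤ e)
    (htf : H₀.CliqueFree 3)
    (hbal : ∀ S : Finset V, S.Nonempty → S ≠ Finset.univ →
      ((H₀.edgeFinset.filter fun ed => ∀ v ∈ ed, v ∈ S).card : ℝ) / S.card <
        (e : ℝ) / h)
    (α : ℝ) (hα : (h : ℝ) / e < α) :
    eta2 H₀ α Finset.univ = (h : ℝ) / (2 * e) + α / 2 ∧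
      ∀ S : Finset V, S.Nonempty → S ≠ Finset.univ →
        eta2 H₀ α S > eta2 H₀ α Finset.univ :=
  strictly_balanced_trianglefree_strictly_alpha_balanced_general H₀ h e hh he he1 hbal α hα
end

section
/- For integers t > k ≥ 1, the complete bipartite graph K_{k,t} is triangle-free, and it is strictly balanced: for every nonempty proper subset S of its vertex set, |E(S)|/|S| < kt/(k+t). -/
open Finset
open scoped Classical

private lemma cb_arith (a b k t : ℝ) (hak : a ≤ k) (hbt : b ≤ t) (hk : 1 ≤ k) (hkt : k < t)
    (ha0 : 0 ≤ a) (hb0 : 0 ≤ b) (hpos : 0 < a + b)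
    (hcase : a < k ∨ (a = k ∧ b < t)) : a * b * (k + t) < k * t * (a + b) := by
  have ht0 : (0:ℝ) < t := by linarith
  rcases eq_or_lt_of_le ha0 with ha | ha
  · have hb : 0 < b := by linarith
    rw [← ha]; nlinarith [mul_pos (mul_pos (lt_of_lt_of_le zero_lt_one hk) ht0) hb]
  rcases eq_or_lt_of_le hb0 with hb | hb
  · rw [← hb]; nlinarith [mul_pos (mul_pos (lt_of_lt_of_le zero_lt_one hk) ht0) ha]
  rcases hcase with h | ⟨h1, h2⟩
  · nlinarith [mul_nonneg (mul_nonneg ha0 (le_trans zero_le_one hk)) (sub_nonneg.mpr hbt),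
      mul_pos (mul_pos hb ht0) (sub_pos.mpr h)]
  · nlinarith [mul_pos (mul_pos ha (lt_of_lt_of_le zero_lt_one hk)) (sub_pos.mpr h2),
      mul_nonneg (mul_nonneg hb0 (le_of_lt ht0)) (sub_nonneg.mpr hak)]

/-- For `t > k ≥ 1`, the complete bipartite graph `K_{k,t}` is triangle-free and strictly
balanced: every nonempty proper subset `S` of its vertices satisfies
`|E(S)|/|S| < kt/(k+t)`. -/
theorem completeBipartite_trianglefree_strictlyBalanced (k t : ℕ) (hk : 1 ≤ k) (hkt : k < t) :
    (completeBipartiteGraph (Fin k) (Fin t)).CliqueFree 3 ∧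
      ∀ S : Finset (Fin k ⊕ Fin t), S.Nonempty → S ≠ Finset.univ →
        (((completeBipartiteGraph (Fin k) (Fin t)).edgeFinset.filter
            fun ed => ∀ v ∈ ed, v ∈ S).card : ℝ) / S.card <
          (k * t : ℝ) / (k + t) := by
  refine ⟨(SimpleGraph.CompleteBipartiteGraph.bicoloring (Fin k) (Fin t)).colorable.cliqueFree
    (by simp), ?_⟩
  intro S hS hSu
  set A : Finset (Fin k) := univ.filter (fun x => Sum.inl x ∈ S) with hA
  set B : Finset (Fin t) := univ.filter (fun y => Sum.inr y ∈ S) with hB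
  have hinj : Function.Injective
      (fun p : Fin k × Fin t => s(Sum.inl p.1, (Sum.inr p.2 : Fin k ⊕ Fin t))) := by
    intro p q h
    simp only [Sym2.eq_iff] at h
    rcases h with ⟨h1, h2⟩ | ⟨h1, h2⟩
    · exact Prod.ext (Sum.inl_injective h1) (Sum.inr_injective h2)
    · exact absurd h1 (by simp)
  have hset : ((completeBipartiteGraph (Fin k) (Fin t)).edgeFinset.filter
      fun ed => ∀ v ∈ ed, v ∈ S) = (A ×ˢ B).image
        (fun p => s(Sum.inl p.1, (Sum.inr p.2 : Fin k ⊕ Fin t))) := by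
    ext ed
    induction ed using Sym2.ind with
    | _ x y =>
      simp only [Finset.mem_filter, SimpleGraph.mem_edgeFinset, SimpleGraph.mem_edgeSet,
        Sym2.mem_iff, Finset.mem_image, Finset.mem_product, hA, hB, Finset.mem_filter,
        Finset.mem_univ, true_and]
      constructor
      · rintro ⟨hadj, hmem⟩
        cases x <;> cases y <;> simp_all [Sym2.eq_iff]
      · rintro ⟨⟨a, b⟩, ⟨ha, hb⟩, heq⟩
        rw [Sym2.eq_iff] at heq
        rcases heq with ⟨h1, h2⟩ | ⟨h1, h2⟩ <;> subst h1 <;> subst h2 <;> simp_all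
  have hcard : ((completeBipartiteGraph (Fin k) (Fin t)).edgeFinset.filter
      fun ed => ∀ v ∈ ed, v ∈ S).card = A.card * B.card := by
    rw [hset, Finset.card_image_of_injective _ hinj, Finset.card_product]
  have hScard : S.card = A.card + B.card := by
    have hU : S = A.image Sum.inl ∪ B.image Sum.inr := by
      ext v; cases v <;> simp [hA, hB]
    rw [hU, Finset.card_union_of_disjoint, Finset.card_image_of_injective _ Sum.inl_injective,
      Finset.card_image_of_injective _ Sum.inr_injective]
    rw [Finset.disjoint_left]
    rintro v hv hw
    simp only [Finset.mem_image] at hv hw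
    obtain ⟨a, -, rfl⟩ := hv
    obtain ⟨b, -, h⟩ := hw
    exact absurd h (by simp)
  have hak : A.card ≤ k := le_trans (Finset.card_le_univ A) (by simp)
  have hbt : B.card ≤ t := le_trans (Finset.card_le_univ B) (by simp)
  have hne : ¬(A.card = k ∧ B.card = t) := by
    rintro ⟨ha, hb⟩
    apply hSu
    have hAu : A = univ := Finset.eq_univ_of_card _ (by simp [ha])
    have hBu : B = univ := Finset.eq_univ_of_card _ (by simp [hb])
    apply Finset.eq_univ_of_forall
    intro v
    cases v with
    | inl a => have := hAu ▸ Finset.mem_univ a; simpa [hA] using this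
    | inr b => have := hBu ▸ Finset.mem_univ b; simpa [hB] using this
  have hpos : 0 < A.card + B.card := by
    rw [← hScard]; exact Finset.card_pos.mpr hS
  rw [hcard, hScard]
  have hcase : A.card < k ∨ (A.card = k ∧ B.card < t) := by
    rcases lt_or_eq_of_le hak with h | h
    · exact Or.inl h
    · exact Or.inr ⟨h, lt_of_le_of_ne hbt fun hb => hne ⟨h, hb⟩⟩
  have key : (A.card : ℝ) * B.card * (k + t) < k * t * (A.card + B.card) :=
    cb_arith _ _ _ _ (by exact_mod_cast hak) (by exact_mod_cast hbt)
      (by exact_mod_cast hk) (by exact_mod_cast hkt) (Nat.cast_nonneg _) (Nat.cast_nonneg _)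
      (by exact_mod_cast hpos)
      (by rcases hcase with h | ⟨h1, h2⟩
          · exact Or.inl (by exact_mod_cast h)
          · exact Or.inr ⟨by exact_mod_cast h1, by exact_mod_cast h2⟩)
  have hpos' : (0 : ℝ) < (A.card : ℝ) + B.card := by exact_mod_cast hpos
  have hkt0 : (0 : ℝ) < (k : ℝ) + t := by positivity
  push_cast
  rw [div_lt_div_iff₀ hpos' hkt0]
  exact key
end
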